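/- arXiv:2005.00122 — 8 statements merged into one kernel-verified Lean document; each statement's English description precedes it below -/
import Mathlib

section
/- Let T_ofdm, T_pil, T_rep be positive reals with T_ofdm < T_pil, and let N_p be a positive natural number with T_CSI = N_p * T_pil. Define the pilot set P = ⋃_{k=0}^{N_p-1} [k*T_pil, k*T_pil + T_ofdm] and, for an offset t ∈ [0, T_rep], say a pilot is hit if some radar arrival t + j*T_rep (j ∈ ℕ) lies in P ∩ [0, T_CSI]. If T_rep ≤ T_CSI, then the probability (under t uniform on [0, T_rep]) that at least one pilot is hit is at least T_ofdm / T_pil. -/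
open MeasureTheory Set

lemma ofReal_max_zero (x : ℝ) : ENNReal.ofReal (max x 0) = ENNReal.ofReal x := by
  rcases le_total x 0 with h | h
  · rw [max_eq_right h, ENNReal.ofReal_zero, ENNReal.ofReal_of_nonpos h]
  · rw [max_eq_left h]

lemma key_step (T_ofdm T_pil T_rep c : ℝ) (hofdm : 0 < T_ofdm) (hop : T_ofdm < T_pil)
    (hrep : 0 < T_rep) (hc : 0 ≤ c) :
    T_ofdm / T_pil * (min (c + T_pil) T_rep - min c T_rep)
      ≤ max (min (c + T_ofdm) T_rep - c) 0 := by
  have hp : 0 < T_pil := hofdm.trans hop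
  have h1 : T_ofdm / T_pil ≤ 1 := by rw [div_le_one hp]; linarith
  have h0 : 0 ≤ T_ofdm / T_pil := by positivity
  rcases le_total T_rep c with h | h
  · have e1 : min (c + T_pil) T_rep = T_rep := min_eq_right (by linarith)
    have e2 : min c T_rep = T_rep := min_eq_right h
    rw [e1, e2]
    simp [le_max_iff]
  · have e2 : min c T_rep = c := min_eq_left h
    rcases le_total T_rep (c + T_ofdm) with h2 | h2
    · have e1 : min (c + T_pil) T_rep = T_rep := min_eq_right (by linarith)
      have e3 : min (c + T_ofdm) T_rep = T_rep := min_eq_right h2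
      rw [e1, e2, e3]
      have : T_ofdm / T_pil * (T_rep - c) ≤ T_rep - c := by nlinarith
      exact this.trans (le_max_left _ _)
    · have e3 : min (c + T_ofdm) T_rep = c + T_ofdm := min_eq_left h2
      rw [e2, e3]
      have hmin : min (c + T_pil) T_rep - c ≤ T_pil := by
        have := min_le_left (c + T_pil) T_rep; linarith
      have hcalc : T_ofdm / T_pil * (min (c + T_pil) T_rep - c)
          ≤ T_ofdm / T_pil * T_pil := mul_le_mul_of_nonneg_left hmin h0
      rw [div_mul_cancel₀ _ hp.ne'] at hcalc
      have he : c + T_ofdm - c = T_ofdm := by ring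
      rw [he]
      exact hcalc.trans (le_max_left _ _)

theorem stmt0
    (T_ofdm T_pil T_rep T_CSI : ℝ) (N_p : ℕ)
    (hofdm : 0 < T_ofdm) (hop : T_ofdm < T_pil) (hrep : 0 < T_rep)
    (hNp : 0 < N_p) (hCSI : T_CSI = N_p * T_pil) (hle : T_rep ≤ T_CSI) :
    T_ofdm / T_pil ≤
      (volume {t ∈ Icc (0:ℝ) T_rep |
        ∃ j : ℕ, ∃ k : ℕ, k < N_p ∧
          t + j * T_rep ∈ Icc ((k:ℝ) * T_pil) ((k:ℝ) * T_pil + T_ofdm) ∩ Icc 0 T_CSI}).toReal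
      / T_rep := by
  have hp : 0 < T_pil := hofdm.trans hop
  set E := {t ∈ Icc (0:ℝ) T_rep |
        ∃ j : ℕ, ∃ k : ℕ, k < N_p ∧
          t + j * T_rep ∈ Icc ((k:ℝ) * T_pil) ((k:ℝ) * T_pil + T_ofdm) ∩ Icc 0 T_CSI} with hE
  set I : ℕ → Set ℝ := fun k =>
    Icc ((k:ℝ) * T_pil) (min ((k:ℝ) * T_pil + T_ofdm) T_rep) with hI
  have hsub : ⋃ k ∈ Finset.range N_p, I k ⊆ E := by
    intro t ht
    simp only [Finset.mem_range, mem_iUnion, hI, mem_Icc] at ht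
    obtain ⟨k, hk, h1, h2⟩ := ht
    have hk0 : (0:ℝ) ≤ (k:ℝ) * T_pil := by positivity
    have h2a : t ≤ (k:ℝ) * T_pil + T_ofdm := h2.trans (min_le_left _ _)
    have h2b : t ≤ T_rep := h2.trans (min_le_right _ _)
    refine ⟨⟨by linarith, h2b⟩, 0, k, hk, ?_, ?_⟩
    · simp only [Nat.cast_zero, zero_mul, add_zero, mem_Icc]
      exact ⟨h1, h2a⟩
    · simp only [Nat.cast_zero, zero_mul, add_zero, mem_Icc]
      exact ⟨by linarith, by linarith⟩
  have hEsub : E ⊆ Icc (0:ℝ) T_rep := sep_subset _ _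
  have hfin : volume E ≠ ⊤ :=
    ((measure_mono hEsub).trans_lt (by simp [Real.volume_Icc])).ne
  have hdisj : (↑(Finset.range N_p) : Set ℕ).PairwiseDisjoint I := by
    have H : ∀ a b : ℕ, a < b → Disjoint (I a) (I b) := by
      intro a b h
      have hb : (a:ℝ) * T_pil + T_ofdm < (b:ℝ) * T_pil := by
        have : (a:ℝ) + 1 ≤ (b:ℝ) := by exact_mod_cast h
        nlinarith
      apply Set.disjoint_left.mpr
      intro x hx hx'
      simp only [hI, mem_Icc] at hx hx'
      have := hx.2.trans (min_le_left _ _)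
      linarith [hx'.1]
    intro a _ b _ hab
    rcases hab.lt_or_gt with h | h
    · exact H a b h
    · exact (H b a h).symm
  have hvol : ∑ k ∈ Finset.range N_p, volume (I k) ≤ volume E := by
    rw [← measure_biUnion_finset hdisj (fun k _ => measurableSet_Icc)]
    exact measure_mono hsub
  -- f k
  set f : ℕ → ℝ := fun k => max (min ((k:ℝ) * T_pil + T_ofdm) T_rep - (k:ℝ) * T_pil) 0 with hf
  have hIvol : ∀ k : ℕ, volume (I k) = ENNReal.ofReal (f k) := by
    intro k
    rw [hI, hf]
    simp only [Real.volume_Icc]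
    rw [ofReal_max_zero]
  -- telescoping real inequality
  set G : ℕ → ℝ := fun k => min ((k:ℝ) * T_pil) T_rep with hG
  have hsum : T_ofdm / T_pil * T_rep ≤ ∑ k ∈ Finset.range N_p, f k := by
    have htel : ∑ k ∈ Finset.range N_p, (G (k + 1) - G k) = G N_p - G 0 :=
      Finset.sum_range_sub G N_p
    have hG0 : G 0 = 0 := by simp [hG, le_of_lt hrep]
    have hGN : G N_p = T_rep := by
      rw [hG]
      exact min_eq_right (by rw [hCSI] at hle; exact hle)
    have hterm : ∀ k ∈ Finset.range N_p,
        T_ofdm / T_pil * (G (k + 1) - G k) ≤ f k := by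
      intro k _
      have hc : (0:ℝ) ≤ (k:ℝ) * T_pil := by positivity
      have := key_step T_ofdm T_pil T_rep ((k:ℝ) * T_pil) hofdm hop hrep hc
      have hcast : ((k + 1 : ℕ) : ℝ) * T_pil = (k:ℝ) * T_pil + T_pil := by
        push_cast; ring
      simp only [hG, hf, hcast]
      exact this
    calc T_ofdm / T_pil * T_rep
        = ∑ k ∈ Finset.range N_p, T_ofdm / T_pil * (G (k + 1) - G k) := by
          rw [← Finset.mul_sum, htel, hG0, hGN, sub_zero]
      _ ≤ ∑ k ∈ Finset.range N_p, f k := Finset.sum_le_sum hterm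
  have hchain : ENNReal.ofReal (T_ofdm / T_pil * T_rep) ≤ volume E := by
    calc ENNReal.ofReal (T_ofdm / T_pil * T_rep)
        ≤ ENNReal.ofReal (∑ k ∈ Finset.range N_p, f k) := ENNReal.ofReal_le_ofReal hsum
      _ = ∑ k ∈ Finset.range N_p, ENNReal.ofReal (f k) :=
          ENNReal.ofReal_sum_of_nonneg (fun k _ => le_max_right _ _)
      _ = ∑ k ∈ Finset.range N_p, volume (I k) := by
          exact Finset.sum_congr rfl (fun k _ => (hIvol k).symm)
      _ ≤ volume E := hvol
  have hreal : T_ofdm / T_pil * T_rep ≤ (volume E).toReal :=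
    (ENNReal.ofReal_le_iff_le_toReal hfin).mp hchain
  rw [le_div_iff₀ hrep]
  exact hreal
end

section
/- With the same model, for any integer m with 2 ≤ m ≤ N_p, the probability that at least m distinct pilots are interfered is at most min(1, N_p * T_ofdm / (m * T_rep)). -/
open MeasureTheory Set
open scoped Classical ENNReal

/-- Measure of the set of phases in `[0,T)` whose periodic orbit hits `Icc a (a+L)`. -/
lemma periodic_hit_measure (a L T : ℝ) (hL : 0 ≤ L) (hT : 0 < T) :
    volume {t ∈ Ico (0:ℝ) T | ∃ j : ℕ, t + j * T ∈ Icc a (a + L)} ≤ ENNReal.ofReal L := by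
  set B : ℕ → Set ℝ := fun j =>
    (fun t => t + (j : ℝ) * T) ⁻¹' (Icc a (a + L) ∩ Ico ((j : ℝ) * T) ((j : ℝ) * T + T))
  have hsub : {t ∈ Ico (0:ℝ) T | ∃ j : ℕ, t + j * T ∈ Icc a (a + L)} ⊆ ⋃ j, B j := by
    rintro t ⟨⟨ht0, htT⟩, j, hj⟩
    exact mem_iUnion.2 ⟨j, ⟨hj, by simp only [Set.mem_Ico]; constructor <;> linarith⟩⟩
  have hBvol : ∀ j : ℕ, volume (B j) =
      volume (Icc a (a + L) ∩ Ico ((j : ℝ) * T) ((j : ℝ) * T + T)) := by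
    intro j
    exact measure_preimage_add_right volume _ _
  calc volume {t ∈ Ico (0:ℝ) T | ∃ j : ℕ, t + j * T ∈ Icc a (a + L)}
      ≤ volume (⋃ j, B j) := measure_mono hsub
    _ ≤ ∑' j, volume (B j) := measure_iUnion_le _
    _ = ∑' j : ℕ, volume (Icc a (a + L) ∩ Ico ((j : ℝ) * T) ((j : ℝ) * T + T)) :=
        tsum_congr hBvol
    _ = volume (⋃ j : ℕ, Icc a (a + L) ∩ Ico ((j : ℝ) * T) ((j : ℝ) * T + T)) := by
        refine (measure_iUnion ?_ ?_).symm
        · intro i j hij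
          refine Disjoint.inter_left' _ (Disjoint.inter_right' _ ?_)
          rw [Set.Ico_disjoint_Ico]
          rcases hij.lt_or_gt with h | h
          · refine le_trans (min_le_left _ _) (le_trans ?_ (le_max_right _ _))
            have : ((i : ℝ) + 1) ≤ (j : ℝ) := by exact_mod_cast h
            nlinarith
          · refine le_trans (min_le_right _ _) (le_trans ?_ (le_max_left _ _))
            have : ((j : ℝ) + 1) ≤ (i : ℝ) := by exact_mod_cast h
            nlinarith
        · exact fun j => (measurableSet_Icc.inter measurableSet_Ico)
    _ ≤ volume (Icc a (a + L)) := measure_mono (iUnion_subset fun j => inter_subset_left)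
    _ = ENNReal.ofReal L := by rw [Real.volume_Icc]; ring_nf

theorem stmt2
    (T_ofdm T_pil T_rep T_CSI : ℝ) (N_p m : ℕ)
    (hofdm : 0 < T_ofdm) (hop : T_ofdm < T_pil) (hrep : 0 < T_rep)
    (hNp : 0 < N_p) (hCSI : T_CSI = N_p * T_pil)
    (hm2 : 2 ≤ m) (hmNp : m ≤ N_p) :
    (volume {t ∈ Icc (0:ℝ) T_rep |
        m ≤ ((Finset.range N_p).filter (fun (k : ℕ) =>
          ∃ j : ℕ, t + j * T_rep ∈
            Icc ((k:ℝ) * T_pil) ((k:ℝ) * T_pil + T_ofdm) ∩ Icc 0 T_CSI)).card}).toReal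
      / T_rep
      ≤ min 1 (N_p * T_ofdm / (m * T_rep)) := by
  set p : ℕ → ℝ → Prop := fun k t =>
    ∃ j : ℕ, t + j * T_rep ∈
      Icc ((k:ℝ) * T_pil) ((k:ℝ) * T_pil + T_ofdm) ∩ Icc 0 T_CSI with hp
  set Ec : Set ℝ := {t ∈ Icc (0:ℝ) T_rep |
      m ≤ ((Finset.range N_p).filter (fun k => p k t)).card} with hEc
  set E : Set ℝ := {t ∈ Ico (0:ℝ) T_rep |
      m ≤ ((Finset.range N_p).filter (fun k => p k t)).card} with hE
  set A : ℕ → Set ℝ := fun k => {t ∈ Ico (0:ℝ) T_rep | p k t} with hA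
  -- measurability of A k
  have hAmeas : ∀ k, MeasurableSet (A k) := by
    intro k
    have : A k = Ico (0:ℝ) T_rep ∩
        ⋃ j : ℕ, (fun t => t + (j:ℝ) * T_rep) ⁻¹'
          (Icc ((k:ℝ) * T_pil) ((k:ℝ) * T_pil + T_ofdm) ∩ Icc 0 T_CSI) := by
      ext t
      simp only [hA, hp, Set.mem_setOf_eq, Set.mem_inter_iff, Set.mem_iUnion,
        Set.mem_preimage]
    rw [this]
    exact measurableSet_Ico.inter <| MeasurableSet.iUnion fun j =>
      (measurableSet_Icc.inter measurableSet_Icc).preimage (measurable_id.add_const _)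
  -- volume bound for each A k
  have hAvol : ∀ k, volume (A k) ≤ ENNReal.ofReal T_ofdm := by
    intro k
    refine le_trans (measure_mono ?_) (periodic_hit_measure ((k:ℝ) * T_pil) T_ofdm T_rep
      hofdm.le hrep)
    rintro t ⟨ht, j, hj, _⟩
    exact ⟨ht, j, hj⟩
  -- Markov / counting step
  have hcount : (m : ℝ≥0∞) * volume E ≤ (N_p : ℝ≥0∞) * ENNReal.ofReal T_ofdm := by
    set f : ℝ → ℝ≥0∞ := fun t => ∑ k ∈ Finset.range N_p, (A k).indicator 1 t with hf
    have hfmeas : Measurable f :=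
      Finset.measurable_sum _ fun k _ => measurable_one.indicator (hAmeas k)
    have step1 : (m : ℝ≥0∞) * volume E ≤ ∫⁻ t in E, f t := by
      rw [← setLIntegral_const E (m : ℝ≥0∞)]
      refine setLIntegral_mono hfmeas ?_
      rintro t ⟨ht, hcard⟩
      have hsub : (Finset.range N_p).filter (fun k => p k t) ⊆ Finset.range N_p :=
        Finset.filter_subset _ _
      calc (m : ℝ≥0∞) ≤ (((Finset.range N_p).filter (fun k => p k t)).card : ℝ≥0∞) := by
            exact_mod_cast hcard
        _ = ∑ k ∈ (Finset.range N_p).filter (fun k => p k t), (A k).indicator 1 t := by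
            rw [Finset.card_eq_sum_ones]
            push_cast
            refine Finset.sum_congr rfl fun k hk => ?_
            rw [Set.indicator_of_mem]
            · rfl
            · exact ⟨ht, (Finset.mem_filter.1 hk).2⟩
        _ ≤ f t := Finset.sum_le_sum_of_subset hsub
    have step2 : ∫⁻ t in E, f t ≤ ∫⁻ t, f t := setLIntegral_le_lintegral _ _
    have step3 : ∫⁻ t, f t = ∑ k ∈ Finset.range N_p, volume (A k) := by
      rw [hf]
      rw [lintegral_finset_sum _ fun k _ => measurable_one.indicator (hAmeas k)]
      refine Finset.sum_congr rfl fun k _ => ?_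
      rw [lintegral_indicator (hAmeas k)]
      simp
    have step4 : ∑ k ∈ Finset.range N_p, volume (A k) ≤ (N_p : ℝ≥0∞) * ENNReal.ofReal T_ofdm := by
      calc ∑ k ∈ Finset.range N_p, volume (A k)
          ≤ ∑ _k ∈ Finset.range N_p, ENNReal.ofReal T_ofdm :=
            Finset.sum_le_sum fun k _ => hAvol k
        _ = (N_p : ℝ≥0∞) * ENNReal.ofReal T_ofdm := by
            rw [Finset.sum_const, Finset.card_range, nsmul_eq_mul]
    exact step1.trans (step2.trans (step3 ▸ step4))
  -- Ec ⊆ E ∪ {T_rep}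
  have hEcE : volume Ec ≤ volume E := by
    have hsub : Ec ⊆ E ∪ {T_rep} := by
      rintro t ⟨⟨ht0, htT⟩, hcard⟩
      rcases lt_or_eq_of_le htT with h | h
      · exact Or.inl ⟨⟨ht0, h⟩, hcard⟩
      · exact Or.inr h
    calc volume Ec ≤ volume (E ∪ {T_rep}) := measure_mono hsub
      _ ≤ volume E + volume ({T_rep} : Set ℝ) := measure_union_le _ _
      _ = volume E := by simp
  -- finiteness
  have hEfin : volume E ≤ ENNReal.ofReal T_rep := by
    refine le_trans (measure_mono fun t ht => ht.1) ?_
    rw [Real.volume_Ico]; simp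
  have hEne : volume E ≠ ⊤ := (hEfin.trans_lt ENNReal.ofReal_lt_top).ne
  have hEcne : volume Ec ≠ ⊤ := (hEcE.trans_lt (hEfin.trans_lt ENNReal.ofReal_lt_top)).ne
  set x := (volume Ec).toReal with hx
  set v := (volume E).toReal with hv
  have hxv : x ≤ v := ENNReal.toReal_le_toReal hEcne hEne |>.2 hEcE
  have hx0 : 0 ≤ x := ENNReal.toReal_nonneg
  have hm0 : (0:ℝ) < m := by positivity
  -- bound 1 : x ≤ T_rep
  have hxT : x ≤ T_rep := by
    have : volume Ec ≤ ENNReal.ofReal T_rep := hEcE.trans hEfin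
    exact ENNReal.toReal_le_of_le_ofReal hrep.le this
  -- bound 2 : m * v ≤ N_p * T_ofdm
  have hmv : (m:ℝ) * v ≤ (N_p:ℝ) * T_ofdm := by
    have h := ENNReal.toReal_le_toReal (by
        exact ENNReal.mul_ne_top (by simp) hEne)
      (by exact ENNReal.mul_ne_top (by simp) ENNReal.ofReal_lt_top.ne) |>.2 hcount
    rwa [ENNReal.toReal_mul, ENNReal.toReal_mul, ENNReal.toReal_natCast,
      ENNReal.toReal_natCast, ENNReal.toReal_ofReal hofdm.le] at h
  refine le_min ?_ ?_
  · rw [div_le_one hrep]; exact hxT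
  · rw [div_le_div_iff₀ hrep (by positivity)]
    nlinarith [mul_le_mul_of_nonneg_right hmv hrep.le,
      mul_le_mul_of_nonneg_right (mul_le_mul_of_nonneg_left hxv hm0.le) hrep.le]
end

section
/- Suppose T_rep = k0 * T_pil for some positive integer k0 ≤ N_p, and T_ofdm < T_pil. Then the set of offsets t ∈ [0, T_rep) for which at least one pilot interval [k*T_pil, k*T_pil + T_ofdm] (k = 0,...,N_p-1) contains some radar arrival t + j*T_rep (j ∈ ℕ) has Lebesgue measure exactly k0 * T_ofdm; equivalently, the probability of at least one pilot interference equals T_ofdm / T_pil. -/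
/-!
Since the radar period is a multiple of the pilot spacing, shifting an arrival by whole radar
periods moves it from pilot `k` to pilot `k - j k0`. So an offset `t ∈ [0, k0 T_pil)` is hit
exactly when `t` itself lies in one of the first `k0` pilot intervals (only indices in
`[0, k0)` can meet `[0, k0 T_pil)` because `T_ofdm < T_pil`). These `k0` intervals are
disjoint, each of length `T_ofdm`.
-/

open MeasureTheory Set Function

section PeriodicIntervals

variable {T d t : ℝ}

lemma pairwise_disjoint_Icc_natCast_mul (hT : 0 ≤ T) (hd : d < T) :
    Pairwise (Disjoint on fun m : ℕ => Icc ((m : ℝ) * T) (m * T + d)) := by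
  suffices h : ∀ m n : ℕ, m < n →
      Disjoint (Icc ((m : ℝ) * T) (m * T + d)) (Icc ((n : ℝ) * T) (n * T + d)) by
    intro m n hmn
    rcases hmn.lt_or_gt with hlt | hgt
    · exact h m n hlt
    · exact (h n m hgt).symm
  intro m n hmn
  have hmn' : (m : ℝ) + 1 ≤ n := by exact_mod_cast hmn
  rw [Set.disjoint_left]
  rintro x ⟨-, hxm⟩ ⟨hxn, -⟩
  nlinarith

lemma volume_biUnion_range_Icc_natCast_mul (hT : 0 ≤ T) (hd : d < T) (n : ℕ) :
    volume (⋃ m ∈ Finset.range n, Icc ((m : ℝ) * T) (m * T + d)) = ENNReal.ofReal (n * d) := by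
  rw [measure_biUnion_finset
    (fun i _ j _ hij => pairwise_disjoint_Icc_natCast_mul hT hd hij)
    (fun _ _ => measurableSet_Icc)]
  simp only [Real.volume_Icc, add_sub_cancel_left, Finset.sum_const, Finset.card_range,
    nsmul_eq_mul]
  rw [ENNReal.ofReal_mul (Nat.cast_nonneg n), ENNReal.ofReal_natCast]

lemma index_bounds_of_mem_Icc_intCast_mul {n : ℕ} {i : ℤ} (hd : d < T)
    (ht : t ∈ Ico 0 (n * T)) (hi : t ∈ Icc ((i : ℝ) * T) (i * T + d)) : 0 ≤ i ∧ i < n := by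
  obtain ⟨ht0, htn⟩ := ht
  obtain ⟨hit, hti⟩ := hi
  have hT : 0 < T := pos_of_mul_pos_right (ht0.trans_lt htn) (Nat.cast_nonneg n)
  have hi0 : (-1 : ℝ) < i := by nlinarith
  have hin : (i : ℝ) < n := lt_of_mul_lt_mul_right (hit.trans_lt htn) hT.le
  constructor
  · have : (-1 : ℤ) < i := by exact_mod_cast hi0
    omega
  · exact_mod_cast hin

lemma hit_offsets_eq_biUnion_Icc {N n : ℕ} (hT : 0 ≤ T) (hd : d < T) (hn : n ≤ N) :
    {t ∈ Ico (0 : ℝ) (n * T) | ∃ j : ℕ, ∃ k : ℕ, k < N ∧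
        t + j * (n * T) ∈ Icc ((k : ℝ) * T) (k * T + d)}
      = ⋃ m ∈ Finset.range n, Icc ((m : ℝ) * T) (m * T + d) := by
  ext t
  simp only [mem_sep_iff, Finset.mem_range, mem_iUnion, exists_prop]
  constructor
  · rintro ⟨ht, j, k, -, hjk⟩
    have hshift : t ∈ Icc ((((k : ℤ) - j * n : ℤ) : ℝ) * T) (((k : ℤ) - j * n : ℤ) * T + d) := by
      obtain ⟨h1, h2⟩ := hjk
      push_cast
      constructor <;> linarith
    obtain ⟨hi0, hin⟩ := index_bounds_of_mem_Icc_intCast_mul hd ht hshift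
    obtain ⟨m, hm⟩ := Int.eq_ofNat_of_zero_le hi0
    rw [hm, Int.cast_natCast] at hshift
    exact ⟨m, by omega, hshift⟩
  · rintro ⟨m, hm, hmt⟩
    have hm' : (m : ℝ) + 1 ≤ n := by exact_mod_cast hm
    obtain ⟨h1, h2⟩ := hmt
    refine ⟨⟨(by positivity : (0 : ℝ) ≤ m * T).trans h1, by nlinarith⟩, 0, m, by omega, ?_⟩
    simpa using And.intro h1 h2

end PeriodicIntervals

theorem stmt3
    (T_ofdm T_pil T_rep : ℝ) (N_p k0 : ℕ)
    (hofdm : 0 < T_ofdm) (hop : T_ofdm < T_pil)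
    (hk0 : 0 < k0) (hk0Np : k0 ≤ N_p)
    (hrep : T_rep = k0 * T_pil) :
    volume {t ∈ Ico (0:ℝ) T_rep |
        ∃ j : ℕ, ∃ k : ℕ, k < N_p ∧
          t + j * T_rep ∈ Icc ((k:ℝ) * T_pil) ((k:ℝ) * T_pil + T_ofdm)}
      = ENNReal.ofReal (k0 * T_ofdm)
    ∧
    (volume {t ∈ Ico (0:ℝ) T_rep |
        ∃ j : ℕ, ∃ k : ℕ, k < N_p ∧
          t + j * T_rep ∈ Icc ((k:ℝ) * T_pil) ((k:ℝ) * T_pil + T_ofdm)}).toReal / T_rep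
      = T_ofdm / T_pil := by
  subst hrep
  have hpil : 0 ≤ T_pil := (hofdm.trans hop).le
  have hvol := volume_biUnion_range_Icc_natCast_mul hpil hop k0
  rw [← hit_offsets_eq_biUnion_Icc hpil hop hk0Np] at hvol
  refine ⟨hvol, ?_⟩
  rw [hvol, ENNReal.toReal_ofReal (by positivity),
    mul_div_mul_left _ _ (Nat.cast_ne_zero.mpr hk0.ne')]
end

section
/- Let m ≥ 2, k ∈ ℕ with k ≥ 1, and suppose T_rep ∈ (k*T_pil − T_ofdm/(m−1), k*T_pil + T_ofdm/(m−1)) with T_rep > T_ofdm, T_ofdm < T_pil, and (m−1)*k ≤ N_p − 1. Then there exists an offset t ∈ [0, T_ofdm] such that for every i = 0, 1, ..., m−1, the radar arrival t + i*T_rep lies in the pilot interval [i*k*T_pil, i*k*T_pil + T_ofdm]; hence at least m pilots among indices 0,...,N_p−1 are interfered for this offset. -/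
open Set

theorem stmt8
    (T_ofdm T_pil T_rep : ℝ) (N_p m k : ℕ)
    (hofdm : 0 < T_ofdm) (hop : T_ofdm < T_pil) (hrep : T_ofdm < T_rep)
    (hm : 2 ≤ m) (hk : 1 ≤ k) (hkNp : (m - 1) * k ≤ N_p - 1) (hNp : 0 < N_p)
    (hTrep : T_rep ∈ Ioo ((k:ℝ) * T_pil - T_ofdm / ((m:ℝ) - 1))
                        ((k:ℝ) * T_pil + T_ofdm / ((m:ℝ) - 1))) :
    ∃ t ∈ Icc (0:ℝ) T_ofdm, ∀ i : ℕ, i < m →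
      t + i * T_rep ∈ Icc (((i * k : ℕ):ℝ) * T_pil) (((i * k : ℕ):ℝ) * T_pil + T_ofdm) := by
  obtain ⟨h1, h2⟩ := hTrep
  have hm1 : (1:ℝ) ≤ (m:ℝ) - 1 := by
    have : (2:ℝ) ≤ (m:ℝ) := by exact_mod_cast hm
    linarith
  have hm1pos : (0:ℝ) < (m:ℝ) - 1 := by linarith
  have hcancel : ((m:ℝ) - 1) * (T_ofdm / ((m:ℝ) - 1)) = T_ofdm :=
    mul_div_cancel₀ _ (ne_of_gt hm1pos)
  set δ := T_rep - (k:ℝ) * T_pil with hδ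
  have hδu : δ < T_ofdm / ((m:ℝ) - 1) := by simp [hδ]; linarith
  have hδl : -(T_ofdm / ((m:ℝ) - 1)) < δ := by simp [hδ]; linarith
  by_cases hsign : 0 ≤ δ
  · refine ⟨0, ⟨le_refl _, le_of_lt hofdm⟩, ?_⟩
    intro i hi
    have hi' : (i:ℝ) ≤ (m:ℝ) - 1 := by
      have h : (i:ℝ) + 1 ≤ (m:ℝ) := by exact_mod_cast hi
      linarith
    have hiδ : (i:ℝ) * δ ≤ ((m:ℝ) - 1) * δ := mul_le_mul_of_nonneg_right hi' hsign
    have hmδ : ((m:ℝ) - 1) * δ ≤ T_ofdm := by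
      have h := mul_le_mul_of_nonneg_left (le_of_lt hδu) (le_of_lt hm1pos)
      rw [hcancel] at h; exact h
    constructor
    · push_cast
      nlinarith [mul_nonneg (Nat.cast_nonneg (α := ℝ) i) hsign]
    · push_cast
      nlinarith
  · push_neg at hsign
    refine ⟨T_ofdm, ⟨le_of_lt hofdm, le_refl _⟩, ?_⟩
    intro i hi
    have hi' : (i:ℝ) ≤ (m:ℝ) - 1 := by
      have h : (i:ℝ) + 1 ≤ (m:ℝ) := by exact_mod_cast hi
      linarith
    have hiδ : ((m:ℝ) - 1) * δ ≤ (i:ℝ) * δ := by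
      nlinarith
    have hmδ : -T_ofdm ≤ ((m:ℝ) - 1) * δ := by
      have h := mul_le_mul_of_nonneg_left (le_of_lt hδl) (le_of_lt hm1pos)
      rw [mul_neg, hcancel] at h; linarith
    constructor
    · push_cast
      nlinarith
    · push_cast
      nlinarith [mul_nonpos_of_nonneg_of_nonpos (Nat.cast_nonneg (α := ℝ) i) (le_of_lt hsign)]
end

section
/- Let m ≥ 2 and suppose q*T_rep ∈ (k*T_pil − T_ofdm/(m−1), k*T_pil + T_ofdm/(m−1)) for some positive integers q and k with (m−1)*k ≤ N_p − 1, and T_rep > T_ofdm, T_ofdm < T_pil. Then there exists an offset t ∈ [0, T_ofdm] for which at least m pilots among [l*T_pil, l*T_pil + T_ofdm], l = 0,...,N_p−1, each contain some radar arrival t + j*T_rep (j ∈ ℕ). -/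
open Set
open scoped Classical

theorem stmt9
    (T_ofdm T_pil T_rep : ℝ) (N_p m k q : ℕ)
    (hofdm : 0 < T_ofdm) (hop : T_ofdm < T_pil) (hrep : T_ofdm < T_rep)
    (hm : 2 ≤ m) (hk : 1 ≤ k) (hq : 1 ≤ q)
    (hkNp : (m - 1) * k ≤ N_p - 1) (hNp : 0 < N_p)
    (hTrep : (q:ℝ) * T_rep ∈ Ioo ((k:ℝ) * T_pil - T_ofdm / ((m:ℝ) - 1))
                                 ((k:ℝ) * T_pil + T_ofdm / ((m:ℝ) - 1))) :
    ∃ t ∈ Icc (0:ℝ) T_ofdm,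
      m ≤ ((Finset.range N_p).filter (fun (l : ℕ) =>
        ∃ j : ℕ, t + j * T_rep ∈
          Icc ((l:ℝ) * T_pil) ((l:ℝ) * T_pil + T_ofdm))).card := by
  set δ : ℝ := (q:ℝ) * T_rep - (k:ℝ) * T_pil with hδ
  have hM : (0:ℝ) < (m:ℝ) - 1 := by
    have : (2:ℝ) ≤ (m:ℝ) := by exact_mod_cast hm
    linarith
  obtain ⟨h1, h2⟩ := hTrep
  have hupper : δ * ((m:ℝ) - 1) < T_ofdm := by
    have hδlt : δ < T_ofdm / ((m:ℝ) - 1) := by rw [hδ]; linarith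
    calc δ * ((m:ℝ) - 1) < (T_ofdm / ((m:ℝ) - 1)) * ((m:ℝ) - 1) := by
          exact mul_lt_mul_of_pos_right hδlt hM
      _ = T_ofdm := by field_simp
  have hlower : -T_ofdm < δ * ((m:ℝ) - 1) := by
    have hδgt : -(T_ofdm / ((m:ℝ) - 1)) < δ := by rw [hδ]; linarith
    calc -T_ofdm = (-(T_ofdm / ((m:ℝ) - 1))) * ((m:ℝ) - 1) := by field_simp
      _ < δ * ((m:ℝ) - 1) := mul_lt_mul_of_pos_right hδgt hM
  set t : ℝ := if 0 ≤ δ then 0 else T_ofdm with ht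
  have htmem : t ∈ Icc (0:ℝ) T_ofdm := by
    rw [ht]; split_ifs <;> constructor <;> linarith
  refine ⟨t, htmem, ?_⟩
  have key : ∀ i : ℕ, i < m → t + (i:ℝ) * δ ∈ Icc (0:ℝ) T_ofdm := by
    intro i hi
    have hic : (i:ℝ) ≤ (m:ℝ) - 1 := by
      have : (i:ℝ) + 1 ≤ (m:ℝ) := by exact_mod_cast hi
      linarith
    have hi0 : (0:ℝ) ≤ (i:ℝ) := Nat.cast_nonneg i
    rw [ht]
    split_ifs with hsign
    · constructor
      · have := mul_nonneg hi0 hsign; linarith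
      · have : (i:ℝ) * δ ≤ ((m:ℝ) - 1) * δ := mul_le_mul_of_nonneg_right hic hsign
        nlinarith
    · push_neg at hsign
      constructor
      · have : ((m:ℝ) - 1) * δ ≤ (i:ℝ) * δ := by nlinarith
        nlinarith
      · have : (i:ℝ) * δ ≤ 0 := mul_nonpos_of_nonneg_of_nonpos hi0 (le_of_lt hsign)
        linarith
  have hsub : (Finset.range m).image (fun i => i * k) ⊆
      (Finset.range N_p).filter (fun (l : ℕ) =>
        ∃ j : ℕ, t + j * T_rep ∈
          Icc ((l:ℝ) * T_pil) ((l:ℝ) * T_pil + T_ofdm)) := by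
    intro l hl
    simp only [Finset.mem_image, Finset.mem_range] at hl
    obtain ⟨i, hi, rfl⟩ := hl
    have hrange : i * k < N_p := by
      have h1 : i * k ≤ (m - 1) * k := Nat.mul_le_mul_right k (by omega)
      omega
    simp only [Finset.mem_filter, Finset.mem_range]
    refine ⟨hrange, i * q, ?_⟩
    have hkey := key i hi
    have heq : t + ((i * q : ℕ):ℝ) * T_rep =
        ((i * k : ℕ):ℝ) * T_pil + (t + (i:ℝ) * δ) := by
      push_cast
      rw [hδ]; ring
    rw [heq]
    obtain ⟨hk1, hk2⟩ := hkey
    constructor <;> [linarith; linarith]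
  have hinj : Function.Injective (fun i : ℕ => i * k) := fun a b h => by
    simp only at h
    exact Nat.eq_of_mul_eq_mul_right (by omega) h
  calc m = ((Finset.range m).image (fun i => i * k)).card := by
        rw [Finset.card_image_of_injective _ hinj, Finset.card_range]
    _ ≤ _ := Finset.card_le_card hsub
end

section
/- Suppose m pilots with indices l₀ < l₁ < ... < l_{m−1} ≤ N_p − 1 are all interfered for the same offset t (pilot l occupies [l*T_pil, l*T_pil + T_ofdm], radar arrivals t + j*T_rep restricted to [0, N_p*T_pil], T_ofdm < T_pil, T_rep > T_ofdm, m ≥ 2). Then there exist consecutive interfered pilots among them, say with index gap d = l_{i+1} − l_i and radar index gap e, for some i, such that |e*T_rep − d*T_pil| ≤ T_ofdm and d ≤ ⌈(N_p−1)/(m−1)⌉. -/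
open Set

theorem stmt12
    (T_ofdm T_pil T_rep t : ℝ) (N_p m : ℕ)
    (hofdm : 0 < T_ofdm) (hop : T_ofdm < T_pil) (hrep : T_ofdm < T_rep)
    (hm : 2 ≤ m) (hNp : 0 < N_p)
    (l : Fin m → ℕ) (hmono : StrictMono l) (hlast : ∀ i, l i ≤ N_p - 1)
    (j : Fin m → ℕ)
    (hhit : ∀ i, t + j i * T_rep ∈
      Icc ((l i : ℝ) * T_pil) ((l i : ℝ) * T_pil + T_ofdm) ∩ Icc 0 ((N_p:ℝ) * T_pil)) :
    ∃ i : ℕ, ∃ hi : i + 1 < m, ∃ e : ℤ,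
      |(e:ℝ) * T_rep - ((l ⟨i+1, hi⟩ - l ⟨i, Nat.lt_of_succ_lt hi⟩ : ℕ):ℝ) * T_pil| ≤ T_ofdm
      ∧ l ⟨i+1, hi⟩ - l ⟨i, Nat.lt_of_succ_lt hi⟩ ≤ ⌈((N_p:ℝ) - 1) / ((m:ℝ) - 1)⌉₊ := by
  set c := ⌈((N_p:ℝ) - 1) / ((m:ℝ) - 1)⌉₊ with hc
  -- pigeonhole: some gap ≤ c
  have key : ∃ i : ℕ, ∃ hi : i + 1 < m,
      l ⟨i+1, hi⟩ - l ⟨i, Nat.lt_of_succ_lt hi⟩ ≤ c := by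
    by_contra hcon
    push_neg at hcon
    have hstep : ∀ i (hi : i + 1 < m),
        l ⟨i, Nat.lt_of_succ_lt hi⟩ + (c + 1) ≤ l ⟨i+1, hi⟩ := by
      intro i hi
      have h1 := hcon i hi
      have h2 : l ⟨i, Nat.lt_of_succ_lt hi⟩ < l ⟨i+1, hi⟩ :=
        hmono (by simp [Fin.lt_def])
      omega
    have hgrow : ∀ k (hk : k < m), l ⟨0, by omega⟩ + k * (c + 1) ≤ l ⟨k, hk⟩ := by
      intro k
      induction k with
      | zero => intro hk; simp
      | succ n ih =>
        intro hk
        have h1 := ih (Nat.lt_of_succ_lt hk)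
        have h2 := hstep n hk
        calc l ⟨0, by omega⟩ + (n+1) * (c+1)
            = (l ⟨0, by omega⟩ + n * (c+1)) + (c+1) := by ring
          _ ≤ l ⟨n, Nat.lt_of_succ_lt hk⟩ + (c+1) := by omega
          _ ≤ l ⟨n+1, hk⟩ := h2
    have hlastm := hgrow (m-1) (by omega)
    have hle := hlast ⟨m-1, by omega⟩
    -- need (m-1)*c ≥ N_p - 1
    have hcle : ((N_p:ℝ) - 1) / ((m:ℝ) - 1) ≤ (c:ℝ) := Nat.le_ceil _
    have hm1 : (0:ℝ) < (m:ℝ) - 1 := by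
      have : (2:ℝ) ≤ (m:ℝ) := by exact_mod_cast hm
      linarith
    have hineq : (N_p:ℝ) - 1 ≤ (c:ℝ) * ((m:ℝ) - 1) := by
      rw [div_le_iff₀ hm1] at hcle; linarith
    have hnat : N_p - 1 ≤ c * (m - 1) := by
      have : ((N_p - 1 : ℕ):ℝ) ≤ ((c * (m-1) : ℕ):ℝ) := by
        push_cast
        have h1 : (1:ℝ) ≤ (N_p:ℝ) := by exact_mod_cast hNp
        have h2 : (1:ℝ) ≤ (m:ℝ) := by
          have : (2:ℝ) ≤ (m:ℝ) := by exact_mod_cast hm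
          linarith
        rw [Nat.cast_sub (by omega), Nat.cast_sub (by omega)]
        push_cast
        linarith [hineq]
      exact_mod_cast this
    -- l(m-1) ≥ (m-1)*(c+1) = (m-1)*c + (m-1) ≥ N_p-1 + 1
    have : (m-1) * (c+1) ≤ N_p - 1 := by omega
    have hm1n : 1 ≤ m - 1 := by omega
    nlinarith [hnat, hm1n]
  obtain ⟨i, hi, hgap⟩ := key
  refine ⟨i, hi, (j ⟨i+1, hi⟩ : ℤ) - (j ⟨i, Nat.lt_of_succ_lt hi⟩ : ℤ), ?_, hgap⟩
  obtain ⟨⟨ha1, ha2⟩, _⟩ := hhit ⟨i, Nat.lt_of_succ_lt hi⟩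
  obtain ⟨⟨hb1, hb2⟩, _⟩ := hhit ⟨i+1, hi⟩
  have hlle : l ⟨i, Nat.lt_of_succ_lt hi⟩ ≤ l ⟨i+1, hi⟩ :=
    le_of_lt (hmono (by simp [Fin.lt_def]))
  rw [abs_le]
  constructor <;>
  · push_cast [Nat.cast_sub hlle]
    linarith
end

section
/- For t uniform on [0, T_rep] with T_rep > T_ofdm, T_ofdm < T_pil, pilots at [k*T_pil, k*T_pil + T_ofdm] for k = 0,...,N_p−1, and radar arrivals t + j*T_rep required to lie in [0, N_p*T_pil]: the expected number of interfered pilots is at most N_p * T_ofdm / T_rep. -/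
/-! By linearity the integral of the number of interfered pilots is the sum over pilots `k` of
the measure of the offsets `t ∈ [0, T_rep]` hitting pilot `k`. Translating by `j * T_rep` moves
those offsets into the `j`-th period `[j * T_rep, (j + 1) * T_rep]`; the periods overlap only at
endpoints, so the pieces of pilot `k` they cut out have total length at most `T_ofdm`. -/

open MeasureTheory Set
open scoped Classical
open Function

theorem pairwise_disjoint_Ico_natCast_mul (T : ℝ) :
    Pairwise (Disjoint on fun j : ℕ => Ico (j * T) ((j + 1) * T)) := by
  intro i j hij
  simpa [zsmul_eq_mul] using
    pairwise_disjoint_Ico_add_zsmul (0 : ℝ) T (Nat.cast_injective.ne hij : (i : ℤ) ≠ j)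

theorem volume_Icc_inter_setOf_exists_add_nat_mul_mem_le (T : ℝ) {S : Set ℝ}
    (hS : MeasurableSet S) :
    volume (Icc 0 T ∩ {t | ∃ j : ℕ, t + j * T ∈ S}) ≤ volume S := by
  rcases le_or_gt T 0 with hT | hT
  · calc volume (Icc 0 T ∩ {t | ∃ j : ℕ, t + j * T ∈ S}) ≤ volume (Icc 0 T) :=
          measure_mono inter_subset_left
      _ = 0 := by simp [hT]
      _ ≤ volume S := bot_le
  have hcover : Icc 0 T ∩ {t | ∃ j : ℕ, t + j * T ∈ S} ⊆
      ⋃ j : ℕ, (· + j * T) ⁻¹' (Icc (j * T) ((j + 1) * T) ∩ S) := by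
    rintro t ⟨⟨ht0, htT⟩, j, hj⟩
    exact mem_iUnion.2 ⟨j, ⟨by linarith, by linarith⟩, hj⟩
  calc volume (Icc 0 T ∩ {t | ∃ j : ℕ, t + j * T ∈ S})
      ≤ volume (⋃ j : ℕ, (· + j * T) ⁻¹' (Icc (j * T) ((j + 1) * T) ∩ S)) := measure_mono hcover
    _ ≤ ∑' j : ℕ, volume ((· + j * T) ⁻¹' (Icc (j * T) ((j + 1) * T) ∩ S)) := measure_iUnion_le _
    _ = ∑' j : ℕ, volume (Ico (j * T) ((j + 1) * T) ∩ S) := by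
      congr with j
      rw [measure_preimage_add_right]
      exact measure_congr (Ico_ae_eq_Icc.symm.inter (ae_eq_refl S))
    _ = volume (⋃ j : ℕ, Ico (j * T) ((j + 1) * T) ∩ S) :=
      (measure_iUnion ((pairwise_disjoint_Ico_natCast_mul T).mono fun _ _ h =>
        h.mono inter_subset_left inter_subset_left) fun _ => measurableSet_Ico.inter hS).symm
    _ ≤ volume S := measure_mono (iUnion_subset fun _ => inter_subset_right)

theorem measurableSet_setOf_exists_add_nat_mul_mem (T : ℝ) {S : Set ℝ} (hS : MeasurableSet S) :
    MeasurableSet {t : ℝ | ∃ j : ℕ, t + j * T ∈ S} := by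
  simp only [ofPred_exists]
  exact .iUnion fun j => measurable_add_const _ hS

theorem integral_card_filter_mem {α ι : Type*} [MeasurableSpace α] (μ : Measure α)
    [IsFiniteMeasure μ] (F : Finset ι) {A : ι → Set α} (hA : ∀ i ∈ F, MeasurableSet (A i)) :
    ∫ x, ((F.filter (fun i => x ∈ A i)).card : ℝ) ∂μ = ∑ i ∈ F, μ.real (A i) := by
  have hcard : ∀ x, ((F.filter (fun i => x ∈ A i)).card : ℝ) = ∑ i ∈ F, (A i).indicator 1 x := by
    intro x
    simp only [Finset.natCast_card_filter, indicator_apply, Pi.one_apply]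
  simp_rw [hcard]
  rw [integral_finsetSum _ fun i hi => (integrable_const 1).indicator (hA i hi)]
  exact Finset.sum_congr rfl fun i hi => integral_indicator_one (hA i hi)

theorem stmt15_general
    (T_ofdm T_pil T_rep : ℝ) (N_p : ℕ)
    (hofdm : 0 < T_ofdm) (hrep : T_ofdm < T_rep) :
    (∫ t in Icc (0:ℝ) T_rep,
      (((Finset.range N_p).filter (fun (k : ℕ) =>
        ∃ j : ℕ, t + j * T_rep ∈
          Icc ((k:ℝ) * T_pil) ((k:ℝ) * T_pil + T_ofdm) ∩ Icc 0 ((N_p:ℝ) * T_pil))).card : ℝ))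
      / T_rep
      ≤ N_p * T_ofdm / T_rep := by
  set pilot : ℕ → Set ℝ := fun k =>
    Icc ((k:ℝ) * T_pil) ((k:ℝ) * T_pil + T_ofdm) ∩ Icc 0 ((N_p:ℝ) * T_pil)
  have hpilot : ∀ k, MeasurableSet (pilot k) := fun k => measurableSet_Icc.inter measurableSet_Icc
  have hhits_le : ∀ k,
      volume.real ({t | ∃ j : ℕ, t + j * T_rep ∈ pilot k} ∩ Icc 0 T_rep) ≤ T_ofdm := by
    intro k
    refine ENNReal.toReal_le_of_le_ofReal hofdm.le ?_
    calc volume ({t | ∃ j : ℕ, t + j * T_rep ∈ pilot k} ∩ Icc 0 T_rep)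
        ≤ volume (pilot k) := by
          rw [inter_comm]; exact volume_Icc_inter_setOf_exists_add_nat_mul_mem_le T_rep (hpilot k)
      _ ≤ volume (Icc ((k:ℝ) * T_pil) ((k:ℝ) * T_pil + T_ofdm)) := measure_mono inter_subset_left
      _ = ENNReal.ofReal T_ofdm := by rw [Real.volume_Icc, add_sub_cancel_left]
  rw [div_le_div_iff_of_pos_right (hofdm.trans hrep)]
  calc _ = ∑ k ∈ Finset.range N_p,
        (volume.restrict (Icc 0 T_rep)).real {t | ∃ j : ℕ, t + j * T_rep ∈ pilot k} :=
        integral_card_filter_mem _ _ fun k _ =>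
          measurableSet_setOf_exists_add_nat_mul_mem T_rep (hpilot k)
    _ ≤ ∑ k ∈ Finset.range N_p, T_ofdm := by
        gcongr with k
        rw [measureReal_restrict_apply' measurableSet_Icc]
        exact hhits_le k
    _ = N_p * T_ofdm := by simp

theorem stmt15
    (T_ofdm T_pil T_rep : ℝ) (N_p : ℕ)
    (hofdm : 0 < T_ofdm) (hop : T_ofdm < T_pil) (hrep : T_ofdm < T_rep) (hNp : 0 < N_p) :
    (∫ t in Icc (0:ℝ) T_rep,
      (((Finset.range N_p).filter (fun (k : ℕ) =>
        ∃ j : ℕ, t + j * T_rep ∈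
          Icc ((k:ℝ) * T_pil) ((k:ℝ) * T_pil + T_ofdm) ∩ Icc 0 ((N_p:ℝ) * T_pil))).card : ℝ))
      / T_rep
      ≤ N_p * T_ofdm / T_rep :=
  stmt15_general T_ofdm T_pil T_rep N_p hofdm hrep
end

section
/- For a fixed pilot index k (pilot interval [k*T_pil, k*T_pil + T_ofdm], T_rep > T_ofdm), the set of offsets t ∈ [0, T_rep] for which some radar arrival t + j*T_rep (j ∈ ℕ) lies in the pilot interval has Lebesgue measure at most T_ofdm + min(T_ofdm, T_rep − T_ofdm), and exactly T_ofdm if k*T_pil ≥ 0 and the interval [k*T_pil, k*T_pil + T_ofdm] does not straddle a multiple of T_rep boundary in the sense that k*T_pil mod T_rep ≤ T_rep − T_ofdm. -/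
/-!
Write `a = r + n T` with `n = ⌊a / T⌋` and `0 ≤ r < T`. An offset `t ∈ [0, T]` hits the pilot
interval `[a, a + L]` at arrival `j` exactly when `t + (j - n) T ∈ [r, r + L]`; for `j = n` this is
`[r, r + L] ∩ [0, T]`, for `j > n` it is inside `[0, r + L - T]`, and `j < n` forces `t = T`.
The two intervals are the pieces of `[r, r + L]` cut at `T` and wrapped around, so their total
length is `L`; and if `r + L ≤ T` the whole interval `[r, r + L]` is hit with `j = n ≥ 0`.
-/

open MeasureTheory Set

def pilotHitSet (T a L : ℝ) : Set ℝ :=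
  {t ∈ Icc 0 T | ∃ j : ℕ, t + j * T ∈ Icc a (a + L)}

section PilotHitSet

variable {T r L : ℝ}

lemma pilotHitSet_subset (hT : 0 ≤ T) (hr : 0 ≤ r) (n : ℤ) :
    pilotHitSet T (r + n * T) L ⊆ Icc r (min (r + L) T) ∪ Icc 0 (r + L - T) ∪ {T} := by
  rintro t ⟨⟨ht0, htT⟩, j, hlo, hhi⟩
  rcases lt_trichotomy (j : ℤ) n with hjn | rfl | hnj
  · have hle : (j : ℝ) + 1 ≤ n := by exact_mod_cast hjn
    have : T ≤ t := by nlinarith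
    exact Or.inr (le_antisymm htT this)
  · push_cast at hlo hhi
    exact Or.inl (Or.inl ⟨by linarith, le_min (by linarith) htT⟩)
  · have hle : (n : ℝ) + 1 ≤ j := by exact_mod_cast hnj
    exact Or.inl (Or.inr ⟨ht0, by nlinarith⟩)

lemma ofReal_min_sub_add_ofReal_sub (hrT : r ≤ T) :
    ENNReal.ofReal (min (r + L) T - r) + ENNReal.ofReal (r + L - T) = ENNReal.ofReal L := by
  rcases le_total (r + L) T with h | h
  · rw [min_eq_left h, ENNReal.ofReal_of_nonpos (show r + L - T ≤ 0 by linarith), add_zero,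
      add_sub_cancel_left]
  · rw [min_eq_right h, ← ENNReal.ofReal_add (by linarith) (by linarith)]
    ring_nf

lemma Icc_subset_pilotHitSet (hr : 0 ≤ r) (hrL : r + L ≤ T) (n : ℕ) :
    Icc r (r + L) ⊆ pilotHitSet T (r + n * T) L :=
  fun _ ⟨hlo, hhi⟩ ↦ ⟨⟨hr.trans hlo, hhi.trans hrL⟩, n, by linarith, by linarith⟩

end PilotHitSet

section Reduction

variable {T : ℝ}

lemma volume_pilotHitSet_le (hT : 0 < T) (a L : ℝ) :
    volume (pilotHitSet T a L) ≤ ENNReal.ofReal L := by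
  set r := a - ⌊a / T⌋ * T
  have hr : 0 ≤ r := Int.sub_floor_div_mul_nonneg a hT
  have hrT : r ≤ T := (Int.sub_floor_div_mul_lt a hT).le
  rw [show a = r + ⌊a / T⌋ * T from (sub_add_cancel a _).symm]
  calc volume (pilotHitSet T (r + ⌊a / T⌋ * T) L)
      ≤ volume (Icc r (min (r + L) T) ∪ Icc 0 (r + L - T) ∪ {T}) :=
        measure_mono (pilotHitSet_subset hT.le hr _)
    _ ≤ volume (Icc r (min (r + L) T)) + volume (Icc 0 (r + L - T)) + volume {T} :=
        (measure_union_le _ _).trans (add_le_add_left (measure_union_le _ _) _)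
    _ = ENNReal.ofReal L := by
        rw [Real.volume_Icc, Real.volume_Icc, measure_singleton, add_zero, sub_zero,
          ofReal_min_sub_add_ofReal_sub hrT]

lemma volume_pilotHitSet_eq {a L : ℝ} (hT : 0 < T) (ha : 0 ≤ a)
    (hL : a - ⌊a / T⌋ * T ≤ T - L) :
    volume (pilotHitSet T a L) = ENNReal.ofReal L := by
  set r := a - ⌊a / T⌋ * T
  have hr : 0 ≤ r := Int.sub_floor_div_mul_nonneg a hT
  have hn : (0 : ℤ) ≤ ⌊a / T⌋ := Int.floor_nonneg.2 (div_nonneg ha hT.le)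
  have ha' : a = r + (⌊a / T⌋.toNat : ℕ) * T := by
    rw [show ((⌊a / T⌋.toNat : ℕ) : ℝ) = ⌊a / T⌋ by exact_mod_cast Int.toNat_of_nonneg hn]
    exact (sub_add_cancel a _).symm
  refine le_antisymm (volume_pilotHitSet_le hT a L) ?_
  calc ENNReal.ofReal L = volume (Icc r (r + L)) := by rw [Real.volume_Icc, add_sub_cancel_left]
    _ ≤ volume (pilotHitSet T a L) :=
        measure_mono (ha' ▸ Icc_subset_pilotHitSet hr (by linarith) _)

end Reduction

theorem stmt16
    (T_ofdm T_pil T_rep : ℝ) (k : ℕ)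
    (hofdm : 0 < T_ofdm) (hpil : 0 < T_pil) (hrep : T_ofdm < T_rep) :
    volume {t ∈ Icc (0:ℝ) T_rep | ∃ j : ℕ,
        t + j * T_rep ∈ Icc ((k:ℝ) * T_pil) ((k:ℝ) * T_pil + T_ofdm)}
      ≤ ENNReal.ofReal (T_ofdm + min T_ofdm (T_rep - T_ofdm))
    ∧
    ((k:ℝ) * T_pil - T_rep * ⌊(k:ℝ) * T_pil / T_rep⌋ ≤ T_rep - T_ofdm →
      volume {t ∈ Icc (0:ℝ) T_rep | ∃ j : ℕ,
          t + j * T_rep ∈ Icc ((k:ℝ) * T_pil) ((k:ℝ) * T_pil + T_ofdm)}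
        = ENNReal.ofReal T_ofdm) := by
  have hrep0 : 0 < T_rep := hofdm.trans hrep
  refine ⟨?_, fun hfit ↦ ?_⟩
  · refine (volume_pilotHitSet_le hrep0 _ _).trans (ENNReal.ofReal_le_ofReal ?_)
    exact le_add_of_nonneg_right (le_min hofdm.le (by linarith))
  · rw [mul_comm T_rep] at hfit
    exact volume_pilotHitSet_eq hrep0 (by positivity) hfit
end
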